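/- arXiv:1408.4783 — 5 statements merged into one kernel-verified Lean document; each statement's English description precedes it below -/
import Mathlib

section
/- Let φ be a quasi-concave function on [0,1] and let φ̃ be its least concave majorant. Then φ̃(t) ≤ 2φ(t) ≤ 2φ̃(t) for all t ∈ [0,1]. -/
/-- If `φ` is quasi-concave on `[0,1]` and `φt` is its least concave majorant, then
`φt t ≤ 2 φ t ≤ 2 φt t` on `[0,1]`. -/
theorem stmt1 (φ φt : ℝ → ℝ)
    (hφ0 : φ 0 = 0)
    (hφpos : ∀ t ∈ Set.Ioo (0:ℝ) 1, 0 < φ t)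
    (hφmono : MonotoneOn φ (Set.Ioc (0:ℝ) 1))
    (hφstar : MonotoneOn (fun t => t / φ t) (Set.Ioc (0:ℝ) 1))
    (hconc : ConcaveOn ℝ (Set.Icc (0:ℝ) 1) φt)
    (hmaj : ∀ t ∈ Set.Icc (0:ℝ) 1, φ t ≤ φt t)
    (hleast : ∀ ψ : ℝ → ℝ, ConcaveOn ℝ (Set.Icc (0:ℝ) 1) ψ →
      (∀ t ∈ Set.Icc (0:ℝ) 1, φ t ≤ ψ t) → ∀ t ∈ Set.Icc (0:ℝ) 1, φt t ≤ ψ t) :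
    ∀ t ∈ Set.Icc (0:ℝ) 1, φt t ≤ 2 * φ t ∧ 2 * φ t ≤ 2 * φt t := by
  -- φ is positive on all of (0,1]
  have hpos : ∀ t ∈ Set.Ioc (0:ℝ) 1, 0 < φ t := by
    intro t ht
    rcases lt_or_eq_of_le ht.2 with h1 | h1
    · exact hφpos t ⟨ht.1, h1⟩
    · have h2 : (1/2 : ℝ) ∈ Set.Ioc (0:ℝ) 1 := by norm_num
      have := hφmono h2 ht (by rw [h1]; norm_num)
      have := hφpos (1/2) (by norm_num)
      linarith
  -- cross-multiplied form of hφstar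
  have hcross : ∀ a ∈ Set.Ioc (0:ℝ) 1, ∀ b ∈ Set.Ioc (0:ℝ) 1, a ≤ b →
      a * φ b ≤ b * φ a := by
    intro a ha b hb hab
    have h := hφstar ha hb hab
    have hpa := hpos a ha
    have hpb := hpos b hb
    simp only [div_le_div_iff₀ hpa hpb] at h
    linarith
  intro t ht
  refine ⟨?_, by linarith [hmaj t ht]⟩
  rcases lt_or_eq_of_le ht.1 with h0 | h0
  · -- t ∈ (0,1]
    have htI : t ∈ Set.Ioc (0:ℝ) 1 := ⟨h0, ht.2⟩
    have hφtpos := hpos t htI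
    set ψ : ℝ → ℝ := fun s => φ t + (φ t / t) * s with hψ
    have hψconc : ConcaveOn ℝ (Set.Icc (0:ℝ) 1) ψ := by
      refine ⟨convex_Icc 0 1, ?_⟩
      intro x _ y _ a b ha hb hab
      simp only [hψ, smul_eq_mul]
      nlinarith [hab]
    have hψmaj : ∀ s ∈ Set.Icc (0:ℝ) 1, φ s ≤ ψ s := by
      intro s hs
      rcases lt_or_eq_of_le hs.1 with hs0 | hs0
      · have hsI : s ∈ Set.Ioc (0:ℝ) 1 := ⟨hs0, hs.2⟩
        rcases le_total s t with hst | hst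
        · have h1 := hφmono hsI htI hst
          have h2 : 0 ≤ (φ t / t) * s :=
            mul_nonneg (div_nonneg hφtpos.le h0.le) hs.1
          simp only [hψ]; linarith
        · have h1 := hcross t htI s hsI hst
          have : φ s ≤ (φ t / t) * s := by
            rw [div_mul_eq_mul_div, le_div_iff₀ h0]
            nlinarith
          simp only [hψ]; linarith
      · simp only [hψ, ← hs0, hφ0, mul_zero, add_zero]
        linarith
    have h := hleast ψ hψconc hψmaj t ht
    have : ψ t = 2 * φ t := by
      simp only [hψ]; field_simp; ring
    linarith
  · -- t = 0
    subst h0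
    rw [hφ0, mul_zero]
    have hφnonneg : ∀ s ∈ Set.Icc (0:ℝ) 1, 0 ≤ φ s := by
      intro s hs
      rcases lt_or_eq_of_le hs.1 with hs0 | hs0
      · exact (hpos s ⟨hs0, hs.2⟩).le
      · rw [← hs0, hφ0]
    have hφtnonneg : ∀ s ∈ Set.Icc (0:ℝ) 1, 0 ≤ φt s := fun s hs =>
      le_trans (hφnonneg s hs) (hmaj s hs)
    set ψ : ℝ → ℝ := fun s => if s = 0 then 0 else φt s with hψ
    have hψle : ∀ s ∈ Set.Icc (0:ℝ) 1, ψ s ≤ φt s := by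
      intro s hs
      simp only [hψ]
      split
      · next h => rw [h]; exact hφtnonneg 0 (by norm_num)
      · exact le_refl _
    have hψconc : ConcaveOn ℝ (Set.Icc (0:ℝ) 1) ψ := by
      refine ⟨convex_Icc 0 1, ?_⟩
      intro x hx y hy a b ha hb hab
      simp only [smul_eq_mul]
      by_cases hz : a * x + b * y = 0
      · have hax : a * x = 0 := by nlinarith [hx.1, hy.1]
        have hby : b * y = 0 := by nlinarith [hx.1, hy.1]
        have h1 : a * ψ x ≤ 0 := by
          rcases mul_eq_zero.mp hax with h | h
          · rw [h, zero_mul]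
          · simp [hψ, h]
        have h2 : b * ψ y ≤ 0 := by
          rcases mul_eq_zero.mp hby with h | h
          · rw [h, zero_mul]
          · simp [hψ, h]
        have : ψ (a * x + b * y) = 0 := by simp [hψ, hz]
        linarith
      · have hconc' := hconc.2 hx hy ha hb hab
        simp only [smul_eq_mul] at hconc'
        have : ψ (a * x + b * y) = φt (a * x + b * y) := by simp [hψ, hz]
        rw [this]
        have hx' := hψle x hx
        have hy' := hψle y hy
        nlinarith
    have hψmaj : ∀ s ∈ Set.Icc (0:ℝ) 1, φ s ≤ ψ s := by
      intro s hs
      simp only [hψ]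
      split
      · next h => rw [h, hφ0]
      · exact hmaj s hs
    have h := hleast ψ hψconc hψmaj 0 (by norm_num)
    simpa [hψ] using h
end

section
/- Let A₁, …, A_N be measurable subsets of [0,1] such that |A_j| ≥ α > 0 for each j and |A_i ∩ A_j| ≤ K·|A_i|·|A_j| for all i ≠ j, where K ≥ 1. If Nα ≥ 2K then |⋃_j A_j| ≥ 1/(4K). -/
open MeasureTheory

/-!
Choose a subfamily whose measures sum to some `S ∈ [1/(2K), 1/K]` (possible since every set
is smaller than `1/(2K)`, unless one set alone already does the job). Adding the sets of the
subfamily one at a time, each set `A` gains at least `|A|` minus its overlaps with the earlier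
ones, so the quasi-independence bound gives `|⋃| ≥ S - (K/2) S²`, which is at least `1/(4K)`
on that interval.
-/

theorem Finset.exists_subset_sum_mem_Icc {ι M : Type*} [AddCommMonoid M] [LinearOrder M]
    [IsOrderedCancelAddMonoid M] (t : Finset ι) {b : ι → M} {c : M} (hc : 0 ≤ c)
    (hle : ∀ i ∈ t, b i ≤ c) (hsum : c ≤ ∑ i ∈ t, b i) :
    ∃ s ⊆ t, ∑ i ∈ s, b i ∈ Set.Icc c (2 • c) := by
  classical
  induction t using Finset.induction_on with
  | empty => exact ⟨∅, subset_rfl, hsum, by simpa using nsmul_nonneg hc 2⟩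
  | insert a t hat ih =>
    by_cases ht : c ≤ ∑ i ∈ t, b i
    · obtain ⟨s, hst, hs⟩ := ih (fun i hi => hle i (Finset.mem_insert_of_mem hi)) ht
      exact ⟨s, hst.trans (Finset.subset_insert a t), hs⟩
    · refine ⟨insert a t, subset_rfl, hsum, ?_⟩
      rw [Finset.sum_insert hat, two_nsmul]
      exact add_le_add (hle a (Finset.mem_insert_self a t)) (not_le.mp ht).le

theorem sum_sub_mul_sq_le_measureReal_biUnion {ι α : Type*} [MeasurableSpace α]
    {μ : Measure α} {A : ι → Set α} {K : ℝ} (hK : 0 ≤ K)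
    (hmeas : ∀ i, MeasurableSet (A i)) (hfin : ∀ i, μ (A i) ≠ ⊤)
    (hcorr : ∀ i j, i ≠ j → μ.real (A i ∩ A j) ≤ K * μ.real (A i) * μ.real (A j))
    (s : Finset ι) :
    ∑ i ∈ s, μ.real (A i) - K / 2 * (∑ i ∈ s, μ.real (A i)) ^ 2 ≤ μ.real (⋃ i ∈ s, A i) := by
  classical
  induction s using Finset.induction_on with
  | empty => simp
  | insert a s has ih =>
    set S := ∑ i ∈ s, μ.real (A i)
    have hUfin : μ (⋃ i ∈ s, A i) ≠ ⊤ :=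
      (measure_biUnion_lt_top s.finite_toSet fun i _ => (hfin i).lt_top).ne
    have hoverlap : μ.real (A a ∩ ⋃ i ∈ s, A i) ≤ K * μ.real (A a) * S := by
      rw [Set.inter_iUnion₂, Finset.mul_sum]
      refine (measureReal_biUnion_finset_le s _).trans (Finset.sum_le_sum fun j hj => ?_)
      exact hcorr a j (ne_of_mem_of_not_mem hj has).symm
    have hunion := measureReal_union_add_inter' (hmeas a) (hfin a) hUfin
    rw [Finset.set_biUnion_insert, Finset.sum_insert has]
    nlinarith [mul_nonneg hK (sq_nonneg (μ.real (A a)))]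

theorem one_div_four_mul_le_sub_mul_sq {K x : ℝ} (hK : 0 < K)
    (hx : x ∈ Set.Icc (1 / (2 * K)) (1 / K)) : 1 / (4 * K) ≤ x - K / 2 * x ^ 2 := by
  obtain ⟨hlo, hhi⟩ := hx
  rw [div_le_iff₀ (by positivity)] at hlo
  rw [le_div_iff₀ hK] at hhi
  rw [div_le_iff₀ (by positivity)]
  nlinarith [mul_nonneg (sub_nonneg.mpr hlo) (sub_nonneg.mpr hhi)]

theorem stmt3_general (N : ℕ) (A : Fin N → Set ℝ) (α K : ℝ) (hK : 1 ≤ K)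
    (hmeas : ∀ j, MeasurableSet (A j)) (hsub : ∀ j, A j ⊆ Set.Icc (0:ℝ) 1)
    (hsize : ∀ j, α ≤ (volume (A j)).toReal)
    (hcorr : ∀ i j, i ≠ j →
      (volume (A i ∩ A j)).toReal ≤ K * (volume (A i)).toReal * (volume (A j)).toReal)
    (hN : 2 * K ≤ N * α) :
    1 / (4 * K) ≤ (volume (⋃ j, A j)).toReal := by
  have hK0 : 0 < K := by linarith
  have hfin : ∀ j, volume (A j) ≠ ⊤ := fun j => measure_ne_top_of_subset (hsub j) (by simp)
  have hUfin : volume (⋃ j, A j) ≠ ⊤ :=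
    measure_ne_top_of_subset (Set.iUnion_subset hsub) (by simp)
  have hquarter : 1 / (4 * K) ≤ 1 / (2 * K) := by gcongr; norm_num
  by_cases hbig : ∃ j, 1 / (2 * K) ≤ volume.real (A j)
  · obtain ⟨j, hj⟩ := hbig
    calc 1 / (4 * K) ≤ volume.real (A j) := hquarter.trans hj
      _ ≤ volume.real (⋃ j, A j) := measureReal_mono (Set.subset_iUnion A j) hUfin
  push Not at hbig
  have htotal : 1 / (2 * K) ≤ ∑ j, volume.real (A j) :=
    calc 1 / (2 * K) ≤ 2 * K := by rw [div_le_iff₀ (by positivity)]; nlinarith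
      _ ≤ ∑ _j : Fin N, α := by simpa [mul_comm] using hN
      _ ≤ ∑ j, volume.real (A j) := Finset.sum_le_sum fun j _ => hsize j
  obtain ⟨s, -, hs⟩ :=
    Finset.univ.exists_subset_sum_mem_Icc (by positivity) (fun j _ => (hbig j).le) htotal
  rw [show 2 • (1 / (2 * K)) = 1 / K by rw [two_nsmul]; field_simp; norm_num] at hs
  calc 1 / (4 * K) ≤ _ := one_div_four_mul_le_sub_mul_sq hK0 hs
    _ ≤ volume.real (⋃ j ∈ s, A j) :=
      sum_sub_mul_sq_le_measureReal_biUnion hK0.le hmeas hfin hcorr s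
    _ ≤ volume.real (⋃ j, A j) := measureReal_mono (Set.iUnion₂_subset_iUnion _ A) hUfin

/-- Quasi-independence lower bound: if `|A j| ≥ α`, `|A i ∩ A j| ≤ K |A i| |A j|` for `i ≠ j`
and `N α ≥ 2K`, then `|⋃ A j| ≥ 1/(4K)`. -/
theorem stmt3 (N : ℕ) (A : Fin N → Set ℝ) (α K : ℝ) (hα : 0 < α) (hK : 1 ≤ K)
    (hmeas : ∀ j, MeasurableSet (A j)) (hsub : ∀ j, A j ⊆ Set.Icc (0:ℝ) 1)
    (hsize : ∀ j, α ≤ (volume (A j)).toReal)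
    (hcorr : ∀ i j, i ≠ j →
      (volume (A i ∩ A j)).toReal ≤ K * (volume (A i)).toReal * (volume (A j)).toReal)
    (hN : 2 * K ≤ N * α) :
    1 / (4 * K) ≤ (volume (⋃ j, A j)).toReal :=
  stmt3_general N A α K hK hmeas hsub hsize hcorr hN
end

section
/- Let k ≥ 4 be a power of 2, and for k/2 < j ≤ k let |F_j| = 2^{-(log₂ k)·2^{2^j}}·2^{-j}/k and r_j = 2^{(log₂ k)·2^{2^j}}. Then Σ_{j=k/2+1}^{k} r_j·|F_j|·log₂log₂(4/|F_j|) ≍ 1 and Σ_{j=k/2+1}^{k} r_j·|F_j|·log₂log₂(4/|F_j|)·log₂log₂log₂log₂(4/|F_j|) ≍ log₂ k, with implied constants absolute (independent of k). -/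
/-!
Here `k = 2^K`. The factor `r_j` cancels the huge part of `|F_j|`, so `r_j |F_j| = 2^{-j}/k`,
while `log₂ (4/|F_j|)` is the integer `K 2^{2^j} + j + K + 2`, which lies between `2^{2^j}` and
`2^{2^{j+1}}`. Hence `log₂ log₂ (4/|F_j|) ∈ [2^j, 2^{j+1}]`, which absorbs the `2^{-j}`, the third
iterated logarithm is `j` up to `1`, and since `k/2 < j ≤ k` the fourth one is `K ± 1`.
Summing `k/2` terms of size `≍ 1/k` gives `≍ 1`, resp. `≍ K = log₂ k`.
-/

open Real Finset

theorem Real.logb_mem_Icc_of_mem_Icc_pow {b x : ℝ} (hb : 1 < b) {m n : ℕ}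
    (hx : x ∈ Set.Icc (b ^ m) (b ^ n)) : logb b x ∈ Set.Icc (m : ℝ) n := by
  have hx0 : 0 < x := (pow_pos (by linarith) m).trans_le hx.1
  rw [← rpow_natCast, ← rpow_natCast] at hx
  exact ⟨(le_logb_iff_rpow_le hb hx0).2 hx.1, (logb_le_iff_le_rpow hb hx0).2 hx.2⟩

theorem logb_natCast_two_pow (K : ℕ) : logb 2 ((2 ^ K : ℕ) : ℝ) = K := by
  rw [Nat.cast_pow, Nat.cast_ofNat, logb_pow, logb_self_eq_one one_lt_two, mul_one]

theorem mul_two_pow_two_pow_add_mem_Icc {K j : ℕ} (hK : 1 ≤ K) (hKj : K < j) (hj : j ≤ 2 ^ K) :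
    K * 2 ^ 2 ^ j + j + K + 2 ∈ Set.Icc (2 ^ 2 ^ j) (2 ^ 2 ^ (j + 1)) := by
  have hj2 : j < 2 ^ j := Nat.lt_two_pow_self
  have hK2 : K < 2 ^ K := Nat.lt_two_pow_self
  have hX : 1 ≤ 2 ^ 2 ^ j := Nat.one_le_two_pow
  have hcoef : 2 * K + j + 2 ≤ 2 ^ 2 ^ j :=
    calc 2 * K + j + 2 ≤ 2 ^ (K + 2) := by rw [pow_add]; omega
      _ ≤ 2 ^ 2 ^ j := Nat.pow_le_pow_right two_pos (by omega)
  constructor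
  · nlinarith
  · calc K * 2 ^ 2 ^ j + j + K + 2 ≤ (2 * K + j + 2) * 2 ^ 2 ^ j := by nlinarith
      _ ≤ 2 ^ 2 ^ j * 2 ^ 2 ^ j := Nat.mul_le_mul_right _ hcoef
      _ = 2 ^ 2 ^ (j + 1) := by rw [← pow_add, pow_succ, mul_two]

theorem sum_Ioc_half_mem_Icc {k : ℕ} (hk : Even k) (hk0 : k ≠ 0) {f : ℕ → ℝ} {a b : ℝ}
    (hf : ∀ j ∈ Ioc (k / 2) k, f j ∈ Set.Icc (a / k) (b / k)) :
    ∑ j ∈ Ioc (k / 2) k, f j ∈ Set.Icc (a / 2) (b / 2) := by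
  obtain ⟨m, rfl⟩ := hk
  have hcard : #(Ioc ((m + m) / 2) (m + m)) = m := by simp; omega
  have hm : (m : ℝ) ≠ 0 := by exact_mod_cast (by omega : m ≠ 0)
  have hlo := card_nsmul_le_sum _ _ _ fun j hj ↦ (hf j hj).1
  have hhi := sum_le_card_nsmul _ _ _ fun j hj ↦ (hf j hj).2
  rw [hcard, nsmul_eq_mul] at hlo hhi
  push_cast at hlo hhi
  constructor
  · convert hlo using 1; field_simp; ring
  · convert hhi using 1; field_simp; ring

/-- `|F_j|` in the paper. -/
noncomputable def blockMeasure (k j : ℕ) : ℝ :=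
  (2:ℝ) ^ (-(logb 2 k * (2:ℝ) ^ (2 ^ j : ℕ))) * (2:ℝ) ^ (-(j:ℝ)) / k

/-- `r_j` in the paper. -/
noncomputable def blockHeight (k j : ℕ) : ℝ :=
  (2:ℝ) ^ (logb 2 k * (2:ℝ) ^ (2 ^ j : ℕ))

theorem blockHeight_mul_blockMeasure (k j : ℕ) :
    blockHeight k j * blockMeasure k j = 2 ^ (-(j:ℝ)) / k := by
  rw [blockHeight, blockMeasure, ← mul_div_assoc, ← mul_assoc, ← rpow_add two_pos,
    add_neg_cancel, rpow_zero, one_mul]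

theorem logb_four_div_blockMeasure (K j : ℕ) :
    logb 2 (4 / blockMeasure (2 ^ K) j) = (K * 2 ^ 2 ^ j + j + K + 2 : ℕ) := by
  have h4 : (4:ℝ) = 2 ^ (2:ℝ) := by norm_num
  rw [blockMeasure, logb_natCast_two_pow, Nat.cast_pow, Nat.cast_ofNat, ← rpow_natCast 2 K, h4,
    div_div_eq_mul_div, ← rpow_add two_pos, ← rpow_add two_pos, ← rpow_sub two_pos,
    logb_rpow two_pos one_lt_two.ne']
  push_cast
  ring

section

variable {K j : ℕ}

theorem lt_of_two_pow_pred_lt (hj : 2 ^ (K - 1) < j) : K < j := by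
  have := Nat.lt_two_pow_self (n := K - 1)
  omega

theorem logb_logb_four_div_blockMeasure_mem_Icc (hK : 1 ≤ K)
    (hj : j ∈ Ioc (2 ^ (K - 1)) (2 ^ K)) :
    logb 2 (logb 2 (4 / blockMeasure (2 ^ K) j)) ∈ Set.Icc ((2:ℝ) ^ j) (2 ^ (j + 1)) := by
  obtain ⟨hjlo, hjhi⟩ := mem_Ioc.1 hj
  have hn := mul_two_pow_two_pow_add_mem_Icc hK (lt_of_two_pow_pred_lt hjlo) hjhi
  have hnR : ((K * 2 ^ 2 ^ j + j + K + 2 : ℕ) : ℝ) ∈ Set.Icc ((2:ℝ) ^ 2 ^ j) (2 ^ 2 ^ (j + 1)) :=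
    ⟨by exact_mod_cast hn.1, by exact_mod_cast hn.2⟩
  rw [logb_four_div_blockMeasure]
  simpa only [Nat.cast_pow, Nat.cast_ofNat] using logb_mem_Icc_of_mem_Icc_pow one_lt_two hnR

theorem blockTerm_mem_Icc (hK : 1 ≤ K) (hj : j ∈ Ioc (2 ^ (K - 1)) (2 ^ K)) :
    blockHeight (2 ^ K) j * blockMeasure (2 ^ K) j * logb 2 (logb 2 (4 / blockMeasure (2 ^ K) j))
      ∈ Set.Icc (1 / ((2 ^ K : ℕ) : ℝ)) (2 / ((2 ^ K : ℕ) : ℝ)) := by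
  have hL := logb_logb_four_div_blockMeasure_mem_Icc hK hj
  rw [pow_succ] at hL
  have hL' : ((2:ℝ) ^ j)⁻¹ * logb 2 (logb 2 (4 / blockMeasure (2 ^ K) j)) ∈ Set.Icc 1 2 :=
    ⟨(le_inv_mul_iff₀ (by positivity)).2 (by simpa using hL.1),
      (inv_mul_le_iff₀ (by positivity)).2 hL.2⟩
  rw [blockHeight_mul_blockMeasure, rpow_neg zero_le_two, rpow_natCast, div_mul_eq_mul_div]
  exact ⟨div_le_div_of_nonneg_right hL'.1 (by positivity),
    div_le_div_of_nonneg_right hL'.2 (by positivity)⟩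

theorem logb_logb_logb_logb_four_div_blockMeasure_mem_Icc (hK : 1 ≤ K)
    (hj : j ∈ Ioc (2 ^ (K - 1)) (2 ^ K)) :
    logb 2 (logb 2 (logb 2 (logb 2 (4 / blockMeasure (2 ^ K) j))))
      ∈ Set.Icc ((K : ℝ) - 1) (K + 1) := by
  obtain ⟨hjlo, hjhi⟩ := mem_Ioc.1 hj
  have hk : 2 ^ K = 2 * 2 ^ (K - 1) := by rw [← pow_succ', Nat.sub_add_cancel hK]
  have h3 := logb_mem_Icc_of_mem_Icc_pow one_lt_two
    (logb_logb_four_div_blockMeasure_mem_Icc hK hj)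
  have h4 := logb_mem_Icc_of_mem_Icc_pow (m := K - 1) (n := K + 1) one_lt_two
    ⟨h3.1.trans' (by exact_mod_cast hjlo.le),
      h3.2.trans (by exact_mod_cast (show j + 1 ≤ 2 ^ (K + 1) by rw [pow_succ]; omega))⟩
  push_cast [hK] at h4
  exact h4

theorem blockTerm_mul_logb_mem_Icc (hK : 1 ≤ K) (hj : j ∈ Ioc (2 ^ (K - 1)) (2 ^ K)) :
    blockHeight (2 ^ K) j * blockMeasure (2 ^ K) j * logb 2 (logb 2 (4 / blockMeasure (2 ^ K) j)) *
        logb 2 (logb 2 (logb 2 (logb 2 (4 / blockMeasure (2 ^ K) j))))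
      ∈ Set.Icc (((K : ℝ) - 1) / (2 ^ K : ℕ)) (2 * (K + 1) / (2 ^ K : ℕ)) := by
  obtain ⟨h1lo, h1hi⟩ := blockTerm_mem_Icc hK hj
  obtain ⟨h4lo, h4hi⟩ := logb_logb_logb_logb_four_div_blockMeasure_mem_Icc hK hj
  have hKR : (1 : ℝ) ≤ K := by exact_mod_cast hK
  constructor
  · calc ((K : ℝ) - 1) / (2 ^ K : ℕ) = 1 / (2 ^ K : ℕ) * (K - 1) := by ring
      _ ≤ _ := mul_le_mul h1lo h4lo (by linarith) ((by positivity : (0:ℝ) ≤ _).trans h1lo)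
  · calc _ ≤ 2 / (2 ^ K : ℕ) * (K + 1 : ℝ) := mul_le_mul h1hi h4hi (by linarith) (by positivity)
      _ = 2 * (K + 1) / (2 ^ K : ℕ) := by ring

end

/-- Norm computations for the counterexample functions: with
`|F_j| = 2^{-(log₂ k)2^{2^j}} 2^{-j}/k` and `r_j = 2^{(log₂ k)2^{2^j}}` for `k/2 < j ≤ k`,
the `L log log L` norm sum is `≍ 1` while the `L log log L log log log log L` sum is
`≍ log₂ k`, with absolute constants. -/
theorem stmt12 :
    ∃ c C : ℝ, 0 < c ∧ 0 < C ∧ ∀ K k : ℕ, k = 2 ^ K → 4 ≤ k →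
      ∀ F r : ℕ → ℝ,
        (∀ j, F j = (2:ℝ) ^ (-(Real.logb 2 k * (2:ℝ) ^ (2 ^ j : ℕ))) *
          (2:ℝ) ^ (-(j:ℝ)) / k) →
        (∀ j, r j = (2:ℝ) ^ (Real.logb 2 k * (2:ℝ) ^ (2 ^ j : ℕ))) →
        (c ≤ ∑ j ∈ Finset.Ioc (k/2) k, r j * F j * Real.logb 2 (Real.logb 2 (4 / F j)) ∧
          ∑ j ∈ Finset.Ioc (k/2) k, r j * F j * Real.logb 2 (Real.logb 2 (4 / F j)) ≤ C) ∧
        (c * Real.logb 2 k ≤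
            ∑ j ∈ Finset.Ioc (k/2) k, r j * F j * Real.logb 2 (Real.logb 2 (4 / F j)) *
              Real.logb 2 (Real.logb 2 (Real.logb 2 (Real.logb 2 (4 / F j)))) ∧
          ∑ j ∈ Finset.Ioc (k/2) k, r j * F j * Real.logb 2 (Real.logb 2 (4 / F j)) *
              Real.logb 2 (Real.logb 2 (Real.logb 2 (Real.logb 2 (4 / F j)))) ≤
            C * Real.logb 2 k) := by
  refine ⟨1 / 4, 2, by norm_num, by norm_num, ?_⟩
  rintro K k rfl hk4 F r hF hr
  obtain rfl : F = blockMeasure (2 ^ K) := funext hF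
  obtain rfl : r = blockHeight (2 ^ K) := funext hr
  have hK : 2 ≤ K := (Nat.pow_le_pow_iff_right one_lt_two).1 hk4
  have hKR : (2 : ℝ) ≤ K := by exact_mod_cast hK
  have hhalf : 2 ^ K / 2 = 2 ^ (K - 1) := by rw [← Nat.pow_div (by omega) two_pos, pow_one]
  have heven : Even (2 ^ K) := (Nat.even_pow' (by omega)).2 even_two
  have hS1 := sum_Ioc_half_mem_Icc heven (by positivity) fun j hj ↦
    blockTerm_mem_Icc (by omega) (hhalf ▸ hj)
  have hS2 := sum_Ioc_half_mem_Icc heven (by positivity) fun j hj ↦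
    blockTerm_mul_logb_mem_Icc (by omega) (hhalf ▸ hj)
  rw [logb_natCast_two_pow]
  exact ⟨⟨by linarith [hS1.1], by linarith [hS1.2]⟩, by linarith [hS2.1], by linarith [hS2.2]⟩
end

section
/- Zygmund's inequality in L² form: there is an absolute constant C such that for every lacunary sequence (m_j) of natural numbers with m_{j+1}/m_j ≥ 2 for all j, every finite sequence of complex coefficients (a_j), and every p ≥ 2, ‖Σ_j a_j e^{i m_j x}‖_{L^p(𝕋)} ≤ C·√p·(Σ_j |a_j|²)^{1/2}. -/
/-!
Lacunarity makes every signed sum `±m_{j₁} ± ⋯ ± m_{jₖ}` of distinct frequencies nonzero, so every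
Riesz product `∏ⱼ (1 + Re (cⱼ e(mⱼ x)))` has mean `1`. Since `exp t ≤ (1 + t) exp (2σ²)` for
`|t| ≤ σ ≤ 1/2`, the function `exp (λ Re f)`, `f = ∑ aⱼ e(mⱼ x)`, is bounded pointwise by
`exp (2λ² ∑ |aⱼ|²)` times such a Riesz product (a term with `|λ aⱼ| > 1/2` goes entirely into the
Gaussian factor). Hence `Re f` and `Im f` are sub-Gaussian with variance proxy `4 ∑ |aⱼ|²`, and a
sub-Gaussian variable with proxy `c` has `p`-th absolute moment at most `(c p)^{p/2}`, by
`tᵖ ≤ (p/e)ᵖ eᵗ`.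
-/

open MeasureTheory ProbabilityTheory Real Finset
open scoped NNReal ENNReal

noncomputable def fourierExp (n : ℤ) (x : ℝ) : ℂ :=
  Complex.exp (2 * π * Complex.I * n * x)

@[fun_prop]
lemma continuous_fourierExp (n : ℤ) : Continuous (fourierExp n) := by
  unfold fourierExp; fun_prop

lemma norm_fourierExp (n : ℤ) (x : ℝ) : ‖fourierExp n x‖ = 1 := by
  rw [fourierExp, Complex.norm_exp]
  simp [Complex.mul_re, Complex.mul_im]

lemma fourierExp_add (n k : ℤ) (x : ℝ) :
    fourierExp (n + k) x = fourierExp n x * fourierExp k x := by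
  simp only [fourierExp, ← Complex.exp_add]
  push_cast
  ring_nf

lemma conj_fourierExp (n : ℤ) (x : ℝ) : starRingEnd ℂ (fourierExp n x) = fourierExp (-n) x := by
  simp only [fourierExp, ← Complex.exp_conj, map_mul, Complex.conj_I, Complex.conj_ofReal,
    map_intCast, map_ofNat]
  push_cast
  ring_nf

lemma prod_fourierExp (t : Finset ℕ) (n : ℕ → ℤ) (x : ℝ) :
    ∏ j ∈ t, fourierExp (n j) x = fourierExp (∑ j ∈ t, n j) x := by
  simp only [fourierExp, ← Complex.exp_sum]
  push_cast
  simp only [Finset.mul_sum, Finset.sum_mul]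

lemma integral_fourierExp_eq_zero {n : ℤ} (hn : n ≠ 0) :
    ∫ x in Set.Icc (0 : ℝ) 1, fourierExp n x = 0 := by
  have hc : 2 * π * Complex.I * n ≠ 0 := by simp [pi_ne_zero, hn]
  rw [integral_Icc_eq_integral_Ioc, ← intervalIntegral.integral_of_le zero_le_one]
  simp only [fourierExp, integral_exp_mul_complex hc]
  have hperiod : Complex.exp (2 * π * Complex.I * n) = 1 := by
    rw [← Complex.exp_int_mul_two_pi_mul_I n]; ring_nf
  simp [hperiod]

/-- The signed sum `∑ j ∈ A, ±m j`, with sign `+` exactly on `B`, is nonzero. -/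
def SignedSumsNeZero (m : ℕ → ℤ) : Prop :=
  ∀ A B : Finset ℕ, A.Nonempty → B ⊆ A → ∑ j ∈ B, m j ≠ ∑ j ∈ A \ B, m j

section Lacunary

variable {m : ℕ → ℕ} (h0 : 0 < m 0) (hm : ∀ j, 2 * m j ≤ m (j + 1))
include h0 hm

lemma sum_range_lt_of_lacunary (J : ℕ) : ∑ j ∈ range J, m j < m J := by
  induction J with
  | zero => simpa using h0
  | succ J ih => rw [sum_range_succ]; linarith [hm J]

lemma sum_lt_of_lacunary {D : Finset ℕ} {J : ℕ} (hD : ∀ j ∈ D, j < J) : ∑ j ∈ D, m j < m J :=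
  (sum_le_sum_of_subset (fun j hj => mem_range.2 (hD j hj))).trans_lt
    (sum_range_lt_of_lacunary h0 hm J)

lemma signedSumsNeZero_of_lacunary : SignedSumsNeZero (fun j => (m j : ℤ)) := by
  intro A B hA hBA
  have key : ∀ C D, C ⊆ A → D ⊆ A → A.max' hA ∈ C → A.max' hA ∉ D →
      ∑ j ∈ D, m j < ∑ j ∈ C, m j := fun C D _ hDA hC hD =>
    (sum_lt_of_lacunary h0 hm fun j hj =>
      lt_of_le_of_ne (A.le_max' j (hDA hj)) (ne_of_mem_of_not_mem hj hD)).trans_le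
      (single_le_sum (fun _ _ => Nat.zero_le _) hC)
  simp only [ne_eq, ← Nat.cast_sum, Nat.cast_inj]
  by_cases hB : A.max' hA ∈ B
  · exact (key B (A \ B) hBA sdiff_subset hB (fun h => (mem_sdiff.1 h).2 hB)).ne'
  · exact (key (A \ B) B sdiff_subset hBA (mem_sdiff.2 ⟨A.max'_mem hA, hB⟩) hB).ne

end Lacunary

section RieszProduct

variable {m : ℕ → ℤ}

lemma ofReal_re_mul_fourierExp (c : ℂ) (n : ℤ) (x : ℝ) :
    ((c * fourierExp n x).re : ℂ) =
      c / 2 * fourierExp n x + starRingEnd ℂ c / 2 * fourierExp (-n) x := by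
  rw [Complex.re_eq_add_conj, map_mul, conj_fourierExp]
  ring

lemma integral_prod_re_mul_fourierExp_eq_zero (hm : SignedSumsNeZero m) {A : Finset ℕ}
    (hA : A.Nonempty) (c : ℕ → ℂ) :
    ∫ x in Set.Icc (0 : ℝ) 1, ∏ j ∈ A, (c j * fourierExp (m j) x).re = 0 := by
  have hexpand : ∀ x, ((∏ j ∈ A, (c j * fourierExp (m j) x).re : ℝ) : ℂ) =
      ∑ B ∈ A.powerset, (∏ j ∈ B, c j / 2) * (∏ j ∈ A \ B, starRingEnd ℂ (c j) / 2) *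
        fourierExp (∑ j ∈ B, m j + ∑ j ∈ A \ B, -m j) x := by
    intro x
    simp only [Complex.ofReal_prod, ofReal_re_mul_fourierExp, prod_add, prod_mul_distrib,
      prod_fourierExp, fourierExp_add]
    exact sum_congr rfl fun B _ => by ring
  have hfreq : ∀ B ∈ A.powerset, ∑ j ∈ B, m j + ∑ j ∈ A \ B, -m j ≠ 0 := fun B hB => by
    rw [sum_neg_distrib, ← sub_eq_add_neg, sub_ne_zero]
    exact hm A B hA (mem_powerset.1 hB)
  suffices h :
      ∫ x in Set.Icc (0 : ℝ) 1, ((∏ j ∈ A, (c j * fourierExp (m j) x).re : ℝ) : ℂ) = 0 by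
    rwa [integral_complex_ofReal, Complex.ofReal_eq_zero] at h
  simp only [hexpand]
  rw [integral_finsetSum _ fun B _ => (by fun_prop : Continuous _).integrableOn_Icc]
  exact sum_eq_zero fun B hB => by
    rw [integral_const_mul, integral_fourierExp_eq_zero (hfreq B hB), mul_zero]

lemma integral_rieszProduct (hm : SignedSumsNeZero m) (t : Finset ℕ) (c : ℕ → ℂ) :
    ∫ x in Set.Icc (0 : ℝ) 1, ∏ j ∈ t, (1 + (c j * fourierExp (m j) x).re) = 1 := by
  simp only [prod_one_add]
  rw [integral_finsetSum _ fun B _ => (by fun_prop : Continuous _).integrableOn_Icc,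
    sum_eq_single_of_mem ∅ (empty_mem_powerset t)]
  · simp
  · exact fun B _ hB =>
      integral_prod_re_mul_fourierExp_eq_zero hm (nonempty_iff_ne_empty.2 hB) c

end RieszProduct

lemma exp_le_ite_mul_exp_two_mul_sq {t σ : ℝ} (ht : |t| ≤ σ) :
    exp t ≤ (if σ ≤ 1 / 2 then 1 + t else 1) * exp (2 * σ ^ 2) := by
  have hsq : t ^ 2 ≤ σ ^ 2 := sq_le_sq' (abs_le.1 ht).1 (abs_le.1 ht).2
  split_ifs with hσ
  · have hquad : exp t ≤ 1 + t + t ^ 2 := by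
      have := (abs_le.1 (abs_exp_sub_one_sub_id_le (ht.trans (by linarith)))).2
      linarith
    have hexp := add_one_le_exp (2 * σ ^ 2)
    have ht' : 0 ≤ 1 + t := by linarith [(abs_le.1 ht).1]
    calc exp t ≤ (1 + t) * (1 + 2 * σ ^ 2) := by nlinarith [(abs_le.1 ht).1]
      _ ≤ (1 + t) * exp (2 * σ ^ 2) := by gcongr; linarith
  · rw [one_mul, exp_le_exp]
    nlinarith [le_abs_self t]

lemma integral_exp_sum_re_mul_fourierExp_le {m : ℕ → ℤ} (hm : SignedSumsNeZero m)
    (c : ℕ → ℂ) (s : Finset ℕ) :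
    ∫ x in Set.Icc (0 : ℝ) 1, exp (∑ j ∈ s, (c j * fourierExp (m j) x).re) ≤
      exp (2 * ∑ j ∈ s, ‖c j‖ ^ 2) := by
  classical
  set good := s.filter fun j => ‖c j‖ ≤ 1 / 2
  have hre : ∀ j x, |(c j * fourierExp (m j) x).re| ≤ ‖c j‖ := fun j x => by
    simpa [norm_fourierExp] using Complex.abs_re_le_norm (c j * fourierExp (m j) x)
  have hpointwise : ∀ x, exp (∑ j ∈ s, (c j * fourierExp (m j) x).re) ≤
      exp (2 * ∑ j ∈ s, ‖c j‖ ^ 2) * ∏ j ∈ good, (1 + (c j * fourierExp (m j) x).re) := by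
    intro x
    calc exp (∑ j ∈ s, (c j * fourierExp (m j) x).re)
        = ∏ j ∈ s, exp ((c j * fourierExp (m j) x).re) := exp_sum _ _
      _ ≤ ∏ j ∈ s, (if ‖c j‖ ≤ 1 / 2 then 1 + (c j * fourierExp (m j) x).re else 1) *
            exp (2 * ‖c j‖ ^ 2) :=
        prod_le_prod (fun _ _ => (exp_pos _).le)
          fun j _ => exp_le_ite_mul_exp_two_mul_sq (hre j x)
      _ = _ := by
        rw [prod_mul_distrib, ← exp_sum, ← mul_sum, prod_filter, mul_comm]
  calc ∫ x in Set.Icc (0 : ℝ) 1, exp (∑ j ∈ s, (c j * fourierExp (m j) x).re)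
      ≤ ∫ x in Set.Icc (0 : ℝ) 1,
          exp (2 * ∑ j ∈ s, ‖c j‖ ^ 2) * ∏ j ∈ good, (1 + (c j * fourierExp (m j) x).re) :=
        integral_mono (by fun_prop : Continuous _).integrableOn_Icc
          (by fun_prop : Continuous _).integrableOn_Icc hpointwise
    _ = exp (2 * ∑ j ∈ s, ‖c j‖ ^ 2) := by
        rw [integral_const_mul, integral_rieszProduct hm, mul_one]

lemma hasSubgaussianMGF_re_sum_mul_fourierExp {m : ℕ → ℤ} (hm : SignedSumsNeZero m)
    (b : ℕ → ℂ) (s : Finset ℕ) :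
    HasSubgaussianMGF (fun x => (∑ j ∈ s, b j * fourierExp (m j) x).re)
      (4 * ∑ j ∈ s, ‖b j‖₊ ^ 2) (volume.restrict (Set.Icc 0 1)) where
  integrable_exp_mul t := (by fun_prop : Continuous _).integrableOn_Icc
  mgf_le t := by
    have hscale : ∀ x, t * (∑ j ∈ s, b j * fourierExp (m j) x).re =
        ∑ j ∈ s, ((t * b j) * fourierExp (m j) x).re := fun x => by
      simp only [Complex.re_sum, mul_sum, mul_assoc, Complex.re_ofReal_mul]
    have hnorm : 2 * ∑ j ∈ s, ‖(t : ℂ) * b j‖ ^ 2 =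
        ((4 * ∑ j ∈ s, ‖b j‖₊ ^ 2 : ℝ≥0) : ℝ) * t ^ 2 / 2 := by
      push_cast
      simp only [norm_mul, Complex.norm_real, norm_eq_abs, mul_pow, sq_abs, ← mul_sum]
      ring
    simp only [mgf, hscale, ← hnorm]
    exact integral_exp_sum_re_mul_fourierExp_le hm _ s

lemma rpow_le_div_exp_one_rpow_mul_exp {t p : ℝ} (ht : 0 ≤ t) (hp : 0 < p) :
    t ^ p ≤ (p / exp 1) ^ p * exp t := by
  have h : t / p ≤ exp (t / p - 1) := by linarith [add_one_le_exp (t / p - 1)]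
  calc t ^ p = p ^ p * (t / p) ^ p := by
        rw [div_rpow ht hp.le, mul_div_cancel₀ _ (rpow_pos_of_pos hp p).ne']
    _ ≤ p ^ p * exp (t / p - 1) ^ p := by gcongr
    _ = (p / exp 1) ^ p * exp t := by
        rw [← exp_mul, div_rpow hp.le (exp_pos 1).le, exp_one_rpow, sub_mul,
          div_mul_cancel₀ _ hp.ne', one_mul, exp_sub]
        ring

lemma abs_rpow_le_mul_exp_add_exp {x p l : ℝ} (hp : 0 < p) (hl : 0 < l) :
    |x| ^ p ≤ (p / (l * exp 1)) ^ p * (exp (l * x) + exp (-l * x)) := by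
  have hexp : exp (l * |x|) ≤ exp (l * x) + exp (-l * x) := by
    rcases abs_choice x with h | h <;> rw [h] <;> simp only [mul_neg, neg_mul] <;>
      linarith [exp_pos (l * x), exp_pos (-(l * x))]
  have hlp : 0 < l ^ p := rpow_pos_of_pos hl p
  rw [div_mul_eq_div_div_swap, div_rpow (by positivity) hl.le, div_mul_eq_mul_div,
    le_div_iff₀ hlp, mul_comm, ← mul_rpow hl.le (abs_nonneg x)]
  calc (l * |x|) ^ p ≤ (p / exp 1) ^ p * exp (l * |x|) :=
        rpow_le_div_exp_one_rpow_mul_exp (by positivity) hp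
    _ ≤ (p / exp 1) ^ p * (exp (l * x) + exp (-l * x)) := by gcongr

lemma ProbabilityTheory.HasSubgaussianMGF.integral_abs_rpow_le {Ω : Type*} [MeasurableSpace Ω]
    {μ : Measure Ω} {X : Ω → ℝ} {c : ℝ≥0} (h : HasSubgaussianMGF X c μ) {p : ℝ} (hp : 2 ≤ p) :
    ∫ ω, |X ω| ^ p ∂μ ≤ √(c * p) ^ p := by
  have hp0 : 0 < p := by linarith
  rcases eq_zero_or_pos c with rfl | hc
  · rw [integral_eq_zero_of_ae (h.ae_eq_zero_of_hasSubgaussianMGF_zero.mono fun ω hω => by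
      simp [hω, zero_rpow hp0.ne'])]
    positivity
  set l := √(p / c)
  have hl : 0 < l := sqrt_pos.2 (by positivity)
  have hmgf : ∀ t, t ^ 2 = p / c → mgf X μ t ≤ exp (p / 2) := fun t ht => by
    convert h.mgf_le t using 2
    rw [ht]; field_simp
  have hconst : (p / (l * exp 1)) ^ p * (exp (p / 2) + exp (p / 2)) ≤ √(c * p) ^ p := by
    have hpl : p / l = √(c * p) := by
      rw [div_eq_iff hl.ne', ← sqrt_mul (by positivity), mul_comm, ← mul_assoc,
        div_mul_cancel₀ _ (by positivity), ← sq, sqrt_sq hp0.le]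
    have htwo : 2 ≤ exp (p / 2) := by linarith [add_one_le_exp (p / 2)]
    have hsplit : exp p = exp (p / 2) * exp (p / 2) := by rw [← exp_add, add_halves]
    rw [← div_div, hpl, div_rpow (sqrt_nonneg _) (exp_pos 1).le, exp_one_rpow, ← two_mul,
      div_mul_eq_mul_div, div_le_iff₀ (exp_pos p)]
    gcongr
    nlinarith [exp_pos (p / 2)]
  calc ∫ ω, |X ω| ^ p ∂μ
      ≤ ∫ ω, (p / (l * exp 1)) ^ p * (exp (l * X ω) + exp (-l * X ω)) ∂μ :=
        integral_mono_of_nonneg (ae_of_all _ fun ω => by positivity)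
          (((h.integrable_exp_mul l).add (h.integrable_exp_mul (-l))).const_mul _)
          (ae_of_all _ fun ω => abs_rpow_le_mul_exp_add_exp hp0 hl)
    _ = (p / (l * exp 1)) ^ p * (mgf X μ l + mgf X μ (-l)) := by
        rw [integral_const_mul, integral_add (h.integrable_exp_mul l) (h.integrable_exp_mul (-l))]
        rfl
    _ ≤ (p / (l * exp 1)) ^ p * (exp (p / 2) + exp (p / 2)) := by
        gcongr
        · exact hmgf l (sq_sqrt (by positivity))
        · exact hmgf (-l) (by rw [neg_sq, sq_sqrt (by positivity)])
    _ ≤ √(c * p) ^ p := hconst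

lemma add_rpow_le_two_rpow_sub_one_mul {a b p : ℝ} (ha : 0 ≤ a) (hb : 0 ≤ b) (hp : 1 ≤ p) :
    (a + b) ^ p ≤ 2 ^ (p - 1) * (a ^ p + b ^ p) := by
  lift a to ℝ≥0 using ha
  lift b to ℝ≥0 using hb
  exact_mod_cast NNReal.rpow_add_le_mul_rpow_add_rpow a b hp

lemma integral_norm_rpow_le_of_hasSubgaussianMGF_re_im {Ω : Type*} [MeasurableSpace Ω]
    {μ : Measure Ω} {f : Ω → ℂ} {c : ℝ≥0} (hre : HasSubgaussianMGF (fun ω => (f ω).re) c μ)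
    (him : HasSubgaussianMGF (fun ω => (f ω).im) c μ) {p : ℝ} (hp : 2 ≤ p) :
    ∫ ω, ‖f ω‖ ^ p ∂μ ≤ (2 * √(c * p)) ^ p := by
  have hp0 : 0 < p := by linarith
  have hint : ∀ {g : Ω → ℝ}, HasSubgaussianMGF g c μ → Integrable (fun ω => |g ω| ^ p) μ :=
    fun hg => by
      have hp' : ((p.toNNReal : ℝ≥0) : ℝ≥0∞) ≠ 0 := by simpa using hp0
      simpa [hp0.le] using (hg.memLp p.toNNReal).integrable_norm_rpow hp' ENNReal.coe_ne_top
  calc ∫ ω, ‖f ω‖ ^ p ∂μ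
      ≤ ∫ ω, 2 ^ (p - 1) * (|(f ω).re| ^ p + |(f ω).im| ^ p) ∂μ :=
        integral_mono_of_nonneg (ae_of_all _ fun ω => by positivity)
          (((hint hre).add (hint him)).const_mul _) (ae_of_all _ fun ω =>
            (rpow_le_rpow (norm_nonneg _) (Complex.norm_le_abs_re_add_abs_im _) hp0.le).trans
              (add_rpow_le_two_rpow_sub_one_mul (abs_nonneg _) (abs_nonneg _) (by linarith)))
    _ = 2 ^ (p - 1) * (∫ ω, |(f ω).re| ^ p ∂μ + ∫ ω, |(f ω).im| ^ p ∂μ) := by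
        rw [integral_const_mul, integral_add (hint hre) (hint him)]
    _ ≤ 2 ^ (p - 1) * (√(c * p) ^ p + √(c * p) ^ p) := by
        gcongr
        · exact hre.integral_abs_rpow_le hp
        · exact him.integral_abs_rpow_le hp
    _ = (2 * √(c * p)) ^ p := by
        rw [mul_rpow zero_le_two (sqrt_nonneg _), ← two_mul, ← mul_assoc,
          ← rpow_add_one two_ne_zero, sub_add_cancel]

/-- Zygmund's inequality in `L^p` form: for lacunary frequencies `m` (ratios `≥ 2`) and any
coefficients, `‖∑ a_j e^{2πi m_j x}‖_{L^p(𝕋)} ≤ C √p (∑ |a_j|²)^{1/2}` for all `p ≥ 2`,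
with an absolute constant `C`. -/
theorem stmt15 :
    ∃ C : ℝ, 0 < C ∧ ∀ m : ℕ → ℕ, (∀ j, 1 ≤ m j) → (∀ j, 2 * m j ≤ m (j + 1)) →
      ∀ (s : Finset ℕ) (a : ℕ → ℂ) (p : ℝ), 2 ≤ p →
        (∫ x in Set.Icc (0:ℝ) 1,
            ‖∑ j ∈ s, a j * Complex.exp (2 * Real.pi * Complex.I * (m j : ℂ) * (x : ℂ))‖ ^ p) ^
            (1 / p) ≤
          C * Real.sqrt p * (∑ j ∈ s, ‖a j‖ ^ 2) ^ ((1:ℝ) / 2) := by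
  refine ⟨4, by norm_num, fun m hm1 hm2 s a p hp => ?_⟩
  have hm := signedSumsNeZero_of_lacunary (hm1 0) hm2
  have hre := hasSubgaussianMGF_re_sum_mul_fourierExp hm a s
  have him : HasSubgaussianMGF (fun x => (∑ j ∈ s, a j * fourierExp (m j) x).im)
      (4 * ∑ j ∈ s, ‖a j‖₊ ^ 2) (volume.restrict (Set.Icc 0 1)) := by
    simpa [mul_assoc, ← mul_sum] using
      hasSubgaussianMGF_re_sum_mul_fourierExp hm (fun j => -Complex.I * a j) s
  have hmoment := integral_norm_rpow_le_of_hasSubgaussianMGF_re_im hre him hp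
  simp only [fourierExp, Int.cast_natCast] at hmoment
  calc _ ≤ ((2 * √((4 * ∑ j ∈ s, ‖a j‖₊ ^ 2 : ℝ≥0) * p)) ^ p) ^ (1 / p) :=
        rpow_le_rpow (integral_nonneg fun x => by positivity) hmoment (by positivity)
    _ = 4 * √p * (∑ j ∈ s, ‖a j‖ ^ 2) ^ ((1 : ℝ) / 2) := by
        rw [← rpow_mul (by positivity), mul_one_div_cancel (by linarith), rpow_one,
          ← sqrt_eq_rpow]
        push_cast
        rw [mul_comm _ p, sqrt_mul (by positivity), sqrt_mul zero_le_four]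
        norm_num
        ring
end

section
/- For each n ∈ ℕ let C_n = ⋃_r C_n(r) be a union of disjoint dyadic subintervals of [0,1], and suppose the John–Nirenberg-type packing condition holds: for all n₁ ≥ n₂, all r₁, r₂: either C_{n₂}(r₂) ⊆ C_{n₁}(r₁) or they are disjoint, and Σ_{r₂ : C_{n₂}(r₂) ⊆ C_{n₁}(r₁)} |C_{n₂}(r₂)| ≤ 2^{-l₂+10}|C_{n₁}(r₁)| whenever the level of C_{n₂} is l₂. Then for sets A_{j} with A_j ⊆ C_{j}, |A_j| ≥ 10^{-3}|C_j|, and 2^{-55} ≤ 2^{l_j}|C_j| ≤ 2^{10}, one has |A_{j₁} ∩ A_{j₂}| ≤ 2^{100}|A_{j₁}||A_{j₂}| for all j₁ ≠ j₂. -/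
open MeasureTheory

/-- Quasi-independence from a John–Nirenberg type packing condition: given families
`C j = ⋃ r, C j r` of disjoint dyadic subintervals of `[0,1]` satisfying nestedness and the
packing bound `∑_{C j₂ r₂ ⊆ C j₁ r₁} |C j₂ r₂| ≤ 2^{-l j₂ + 10} |C j₁ r₁]`, and sets
`A j ⊆ C j` with `|A j| ≥ 10⁻³ |C j|` and `2^{-55} ≤ 2^{l j} |C j| ≤ 2^{10}`, one has
`|A j₁ ∩ A j₂| ≤ 2^{100} |A j₁| |A j₂|` for `j₁ ≠ j₂`. -/
theorem stmt19 (C : ℕ → ℕ → Set ℝ) (l : ℕ → ℕ) (A : ℕ → Set ℝ)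
    (hdyadic : ∀ j r, C j r = ∅ ∨ ∃ m n : ℕ,
      C j r = Set.Ico ((n : ℝ) / 2 ^ m) ((n + 1 : ℝ) / 2 ^ m) ∧ C j r ⊆ Set.Icc 0 1)
    (hdisj : ∀ j, Pairwise (Function.onFun Disjoint (C j)))
    (hnest : ∀ j₁ j₂, j₂ ≤ j₁ → ∀ r₁ r₂, C j₂ r₂ ⊆ C j₁ r₁ ∨ Disjoint (C j₂ r₂) (C j₁ r₁))
    (hpack : ∀ j₁ j₂, j₂ ≤ j₁ → ∀ r₁ : ℕ,
      ∑' r₂ : {r : ℕ // C j₂ r ⊆ C j₁ r₁}, volume (C j₂ r₂.1) ≤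
        ENNReal.ofReal ((2:ℝ) ^ (10 - (l j₂ : ℤ))) * volume (C j₁ r₁))
    (hAmeas : ∀ j, MeasurableSet (A j))
    (hAsub : ∀ j, A j ⊆ ⋃ r, C j r)
    (hAsize : ∀ j, (volume (⋃ r, C j r)).toReal / 1000 ≤ (volume (A j)).toReal)
    (hnorm : ∀ j, (2:ℝ) ^ (-55 : ℤ) ≤ 2 ^ (l j) * (volume (⋃ r, C j r)).toReal ∧
      2 ^ (l j) * (volume (⋃ r, C j r)).toReal ≤ 2 ^ 10) :
    ∀ j₁ j₂, j₁ ≠ j₂ →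
      (volume (A j₁ ∩ A j₂)).toReal ≤
        2 ^ 100 * (volume (A j₁)).toReal * (volume (A j₂)).toReal := by
  -- measurability of the dyadic pieces
  have hCmeas : ∀ j r, MeasurableSet (C j r) := by
    intro j r
    rcases hdyadic j r with h | ⟨m, n, h, -⟩
    · simp [h]
    · rw [h]; exact measurableSet_Ico
  have hCsub : ∀ j, (⋃ r, C j r) ⊆ Set.Icc (0:ℝ) 1 := by
    intro j x hx
    obtain ⟨r, hr⟩ := Set.mem_iUnion.1 hx
    rcases hdyadic j r with h | ⟨m, n, -, hsub⟩
    · rw [h] at hr; exact hr.elim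
    · exact hsub hr
  have hCfin : ∀ j, volume (⋃ r, C j r) ≠ ⊤ := by
    intro j
    refine ne_top_of_le_ne_top ?_ (measure_mono (hCsub j))
    simp [Real.volume_Icc]
  -- key measure bound for j₂ ≤ j₁
  have key : ∀ j₁ j₂, j₂ ≤ j₁ →
      volume (A j₁ ∩ A j₂) ≤
        ENNReal.ofReal ((2:ℝ) ^ (10 - (l j₂ : ℤ))) * volume (⋃ r, C j₁ r) := by
    intro j₁ j₂ hle
    have hsub : A j₁ ∩ A j₂ ⊆
        ⋃ r₁, ⋃ r₂ : {r : ℕ // C j₂ r ⊆ C j₁ r₁}, C j₂ r₂.1 := by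
      rintro x ⟨h1, h2⟩
      obtain ⟨r₁, hr₁⟩ := Set.mem_iUnion.1 (hAsub j₁ h1)
      obtain ⟨r₂, hr₂⟩ := Set.mem_iUnion.1 (hAsub j₂ h2)
      rcases hnest j₁ j₂ hle r₁ r₂ with h | h
      · exact Set.mem_iUnion.2 ⟨r₁, Set.mem_iUnion.2 ⟨⟨r₂, h⟩, hr₂⟩⟩
      · exact (h.ne_of_mem hr₂ hr₁ rfl).elim
    calc volume (A j₁ ∩ A j₂)
        ≤ ∑' r₁, volume (⋃ r₂ : {r : ℕ // C j₂ r ⊆ C j₁ r₁}, C j₂ r₂.1) :=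
          (measure_mono hsub).trans (measure_iUnion_le _)
      _ ≤ ∑' r₁, ∑' r₂ : {r : ℕ // C j₂ r ⊆ C j₁ r₁}, volume (C j₂ r₂.1) :=
          ENNReal.tsum_le_tsum fun r₁ => measure_iUnion_le _
      _ ≤ ∑' r₁, ENNReal.ofReal ((2:ℝ) ^ (10 - (l j₂ : ℤ))) * volume (C j₁ r₁) :=
          ENNReal.tsum_le_tsum fun r₁ => hpack j₁ j₂ hle r₁
      _ = ENNReal.ofReal ((2:ℝ) ^ (10 - (l j₂ : ℤ))) * ∑' r₁, volume (C j₁ r₁) :=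
          ENNReal.tsum_mul_left
      _ = ENNReal.ofReal ((2:ℝ) ^ (10 - (l j₂ : ℤ))) * volume (⋃ r₁, C j₁ r₁) := by
          rw [measure_iUnion (hdisj j₁) (hCmeas j₁)]
  -- symmetric reduction
  have main : ∀ j₁ j₂, j₂ ≤ j₁ →
      (volume (A j₁ ∩ A j₂)).toReal ≤
        2 ^ 100 * (volume (A j₁)).toReal * (volume (A j₂)).toReal := by
    intro j₁ j₂ hle
    have hk := key j₁ j₂ hle
    set c₁ := (volume (⋃ r, C j₁ r)).toReal with hc₁def
    set c₂ := (volume (⋃ r, C j₂ r)).toReal with hc₂def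
    set a₁ := (volume (A j₁)).toReal with ha₁def
    set a₂ := (volume (A j₂)).toReal with ha₂def
    set t : ℝ := 2 ^ (l j₂) with htdef
    have ht : (0:ℝ) < t := by positivity
    have hofR : (2:ℝ) ^ (10 - (l j₂ : ℤ)) = 2 ^ (10:ℕ) / t := by
      rw [htdef, zpow_sub₀ (two_ne_zero), zpow_natCast]
      norm_num
    have hLT : (volume (A j₁ ∩ A j₂)).toReal ≤ (2 ^ (10:ℕ) / t) * c₁ := by
      have hfin : ENNReal.ofReal ((2:ℝ) ^ (10 - (l j₂ : ℤ))) * volume (⋃ r, C j₁ r) ≠ ⊤ :=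
        ENNReal.mul_ne_top ENNReal.ofReal_ne_top (hCfin j₁)
      have := ENNReal.toReal_mono hfin hk
      rwa [ENNReal.toReal_mul, ENNReal.toReal_ofReal (by positivity), hofR] at this
    have ha₁ : c₁ / 1000 ≤ a₁ := hAsize j₁
    have ha₂ : c₂ / 1000 ≤ a₂ := hAsize j₂
    have hc₂ : (2:ℝ) ^ (-55 : ℤ) ≤ t * c₂ := (hnorm j₂).1
    have h55 : (2:ℝ) ^ (-55 : ℤ) = ((2:ℝ) ^ (55:ℕ))⁻¹ := by
      rw [zpow_neg]; norm_num
    rw [h55] at hc₂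
    have hc₁0 : 0 ≤ c₁ := ENNReal.toReal_nonneg
    have hc₂0 : 0 ≤ c₂ := ENNReal.toReal_nonneg
    have ha₁0 : 0 ≤ a₁ := ENNReal.toReal_nonneg
    refine hLT.trans ?_
    rw [div_mul_eq_mul_div, div_le_iff₀ ht]
    have hp : (c₁ / 1000) * (c₂ / 1000) ≤ a₁ * a₂ :=
      mul_le_mul ha₁ ha₂ (by positivity) ha₁0
    nlinarith [mul_le_mul_of_nonneg_right hp ht.le,
      mul_le_mul_of_nonneg_left hc₂ hc₁0, mul_nonneg hc₁0 hc₂0,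
      mul_nonneg (mul_nonneg hc₁0 hc₂0) ht.le]
  intro j₁ j₂ _
  rcases le_total j₂ j₁ with h | h
  · exact main j₁ j₂ h
  · have := main j₂ j₁ h
    rw [Set.inter_comm] at this
    linarith
end
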